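/- arXiv:1311.0208 — 3 statements merged into one kernel-verified Lean document; each statement's English description precedes it below -/
import Mathlib

section
/- Let n ≥ 1 and consider finite multisets of nonempty subsets of {1,…,n} (each subset recording the boundary components enclosed by a Dehn twist curve in a positive factorization). Suppose a multiset F of nonempty subsets of {1,…,n} satisfies: for all distinct i,j, the number of members of F containing both i and j equals 1, and for each i, the number of members of F of size ≥ 2 containing i is at most 2. If n ≠ 3, then either F contains exactly one subset of size ≥ 2, which equals {1,…,n}, or all members of F are singletons and n ≤ 2. -/
private lemma cover_aux {n : ℕ} (F : Multiset (Finset (Fin n)))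
    (hjoint : ∀ i j : Fin n, i ≠ j →
      (F.filter (fun A => i ∈ A ∧ j ∈ A)).card = 1)
    (i j : Fin n) (hij : i ≠ j) :
    ∃ B ∈ F, i ∈ B ∧ j ∈ B ∧ ∀ C ∈ F, i ∈ C → j ∈ C → C = B := by
  obtain ⟨B, hB⟩ := Multiset.card_eq_one.mp (hjoint i j hij)
  have hBm : B ∈ F.filter (fun A => i ∈ A ∧ j ∈ A) := by
    rw [hB]; exact Multiset.mem_singleton_self B
  obtain ⟨hBF, hiB, hjB⟩ := Multiset.mem_filter.mp hBm
  refine ⟨B, hBF, hiB, hjB, fun C hC hi hj => ?_⟩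
  have : C ∈ F.filter (fun A => i ∈ A ∧ j ∈ A) := Multiset.mem_filter.mpr ⟨hC, hi, hj⟩
  rwa [hB, Multiset.mem_singleton] at this

private lemma three_blocks_aux {n : ℕ} (F : Multiset (Finset (Fin n))) (x : Fin n)
    (hmult : (F.filter (fun A => x ∈ A ∧ 2 ≤ A.card)).card ≤ 2)
    (C1 C2 C3 : Finset (Fin n))
    (h1 : C1 ∈ F) (h2 : C2 ∈ F) (h3 : C3 ∈ F)
    (p1 : x ∈ C1 ∧ 2 ≤ C1.card) (p2 : x ∈ C2 ∧ 2 ≤ C2.card) (p3 : x ∈ C3 ∧ 2 ≤ C3.card)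
    (h12 : C1 ≠ C2) (h13 : C1 ≠ C3) (h23 : C2 ≠ C3) : False := by
  set S := F.filter (fun A => x ∈ A ∧ 2 ≤ A.card) with hS
  have m1 : C1 ∈ S := Multiset.mem_filter.mpr ⟨h1, p1⟩
  have m2 : C2 ∈ S := Multiset.mem_filter.mpr ⟨h2, p2⟩
  have m3 : C3 ∈ S := Multiset.mem_filter.mpr ⟨h3, p3⟩
  have hsub : ({C1, C2, C3} : Finset (Finset (Fin n))) ⊆ S.toFinset := by
    intro C hC
    simp only [Finset.mem_insert, Finset.mem_singleton] at hC
    rcases hC with rfl | rfl | rfl <;> simpa [Multiset.mem_toFinset]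
  have hcard : ({C1, C2, C3} : Finset (Finset (Fin n))).card = 3 := by
    rw [Finset.card_insert_of_notMem (by simp [h12, h13]),
      Finset.card_insert_of_notMem (by simp [h23]), Finset.card_singleton]
  have h1 := Finset.card_le_card hsub
  have h2 := S.toFinset_card_le
  omega

private lemma card_le_two_aux {n : ℕ} (F : Multiset (Finset (Fin n)))
    (hjoint : ∀ i j : Fin n, i ≠ j →
      (F.filter (fun A => i ∈ A ∧ j ∈ A)).card = 1)
    (hmult : ∀ i : Fin n,
      (F.filter (fun A => i ∈ A ∧ 2 ≤ A.card)).card ≤ 2)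
    (B : Finset (Fin n)) (hBF : B ∈ F) (x : Fin n) (hx : x ∉ B) : B.card ≤ 2 := by
  by_contra h
  push_neg at h
  obtain ⟨y1, hy1, y2, hy2, y3, hy3, h12, h13, h23⟩ := Finset.two_lt_card.mp h
  have hxy : ∀ y ∈ B, x ≠ y := fun y hy e => hx (e ▸ hy)
  obtain ⟨C1, hC1F, hx1, hy1', hu1⟩ := cover_aux F hjoint x y1 (hxy y1 hy1)
  obtain ⟨C2, hC2F, hx2, hy2', hu2⟩ := cover_aux F hjoint x y2 (hxy y2 hy2)
  obtain ⟨C3, hC3F, hx3, hy3', hu3⟩ := cover_aux F hjoint x y3 (hxy y3 hy3)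
  have key : ∀ (C C' : Finset (Fin n)), C ∈ F → C' ∈ F → x ∈ C →
      ∀ (a b : Fin n), a ≠ b → a ∈ B → b ∈ B → a ∈ C → b ∈ C' → C ≠ C' := by
    rintro C C' hC hC' hxC a b hab ha hb haC hbC' rfl
    obtain ⟨D, hDF, _, _, huD⟩ := cover_aux F hjoint a b hab
    have e1 : C = D := huD C hC haC hbC'
    have e2 : B = D := huD B hBF ha hb
    exact hx (by rw [e2, ← e1]; exact hxC)
  have c12 : C1 ≠ C2 := key C1 C2 hC1F hC2F hx1 y1 y2 h12 hy1 hy2 hy1' hy2'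
  have c13 : C1 ≠ C3 := key C1 C3 hC1F hC3F hx1 y1 y3 h13 hy1 hy3 hy1' hy3'
  have c23 : C2 ≠ C3 := key C2 C3 hC2F hC3F hx2 y2 y3 h23 hy2 hy3 hy2' hy3'
  have two1 : 2 ≤ C1.card := Finset.one_lt_card.mpr ⟨x, hx1, y1, hy1', hxy y1 hy1⟩
  have two2 : 2 ≤ C2.card := Finset.one_lt_card.mpr ⟨x, hx2, y2, hy2', hxy y2 hy2⟩
  have two3 : 2 ≤ C3.card := Finset.one_lt_card.mpr ⟨x, hx3, y3, hy3', hxy y3 hy3⟩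
  exact three_blocks_aux F x (hmult x) C1 C2 C3 hC1F hC2F hC3F
    ⟨hx1, two1⟩ ⟨hx2, two2⟩ ⟨hx3, two3⟩ c12 c13 c23

/-- Combinatorial core of Lemma 4.1: let `F` be a finite multiset of nonempty
subsets of `{1,…,n}` (the sets of boundary components enclosed by the curves in
a positive factorization of `τ_{b₁}⋯τ_{b_{n+1}}`).  If every pair of distinct
elements is contained in exactly one member of `F`, and each element lies in at
most two members of size `≥ 2`, then for `n ≠ 3` either `F` has exactly one
member of size `≥ 2`, namely all of `{1,…,n}`, or all members of `F` are
singletons and `n ≤ 2`. -/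
theorem planar_factorization_combinatorics (n : ℕ) (hn : 1 ≤ n) (hne : n ≠ 3)
    (F : Multiset (Finset (Fin n)))
    (hnonempty : ∀ A ∈ F, A.Nonempty)
    (hjoint : ∀ i j : Fin n, i ≠ j →
      (F.filter (fun A => i ∈ A ∧ j ∈ A)).card = 1)
    (hmult : ∀ i : Fin n,
      (F.filter (fun A => i ∈ A ∧ 2 ≤ A.card)).card ≤ 2) :
    F.filter (fun A => 2 ≤ A.card) = {Finset.univ} ∨
      ((∀ A ∈ F, A.card = 1) ∧ n ≤ 2) := by
  rcases eq_or_lt_of_le hn with h1 | h2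
  · -- n = 1 : all members are singletons
    right
    refine ⟨fun A hA => ?_, by omega⟩
    have hpos : 0 < A.card := Finset.card_pos.mpr (hnonempty A hA)
    have hle : A.card ≤ 1 := by
      have := Finset.card_le_univ A
      simpa [← h1] using this
    omega
  · -- n ≥ 2
    left
    have huniv : ∀ A ∈ F, 2 ≤ A.card → A = Finset.univ := by
      intro A hA h2A
      rcases (by omega : n = 2 ∨ 4 ≤ n) with hn2 | hn4
      · apply Finset.eq_univ_of_card
        have hle := Finset.card_le_univ A
        simp only [Finset.card_univ, Fintype.card_fin] at *
        omega
      · by_contra hAne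
        obtain ⟨x, hxA⟩ : ∃ x, x ∉ A := by
          by_contra hall
          push_neg at hall
          exact hAne (Finset.eq_univ_iff_forall.mpr hall)
        have hA2 : A.card = 2 :=
          le_antisymm (card_le_two_aux F hjoint hmult A hA x hxA) h2A
        obtain ⟨a, b, hab, hAab⟩ := Finset.card_eq_two.mp hA2
        have haA : a ∈ A := by rw [hAab]; simp
        have hbA : b ∈ A := by rw [hAab]; simp
        -- pick c ≠ d outside A
        have hsd : 1 < (Finset.univ \ A).card := by
          rw [Finset.card_sdiff_of_subset (Finset.subset_univ A), Finset.card_univ,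
            Fintype.card_fin, hA2]
          omega
        obtain ⟨c, hc, d, hd, hcd⟩ := Finset.one_lt_card.mp hsd
        have hcA : c ∉ A := (Finset.mem_sdiff.mp hc).2
        have hdA : d ∉ A := (Finset.mem_sdiff.mp hd).2
        have hac : a ≠ c := fun e => hcA (e ▸ haA)
        have had : a ≠ d := fun e => hdA (e ▸ haA)
        obtain ⟨C, hCF, haC, hcC, huC⟩ := cover_aux F hjoint a c hac
        obtain ⟨D, hDF, haD, hdD, huD⟩ := cover_aux F hjoint a d had
        have hCA : C ≠ A := fun e => hcA (e ▸ hcC)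
        have hDA : D ≠ A := fun e => hdA (e ▸ hdD)
        have hCD : C ≠ D := by
          rintro rfl
          -- C contains a, c, d so card ≥ 3; but C ≠ univ forces card ≤ 2
          have hCuniv : C ≠ Finset.univ := by
            rintro rfl
            obtain ⟨E, hEF, _, _, huE⟩ := cover_aux F hjoint a b hab
            have e1 : A = E := huE A hA haA hbA
            have e2 : Finset.univ = E := huE Finset.univ hCF haC (Finset.mem_univ b)
            exact hAne (e1.trans e2.symm)
          obtain ⟨z, hzC⟩ : ∃ z, z ∉ C := by
            by_contra hall
            push_neg at hall
            exact hCuniv (Finset.eq_univ_iff_forall.mpr hall)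
          have hle := card_le_two_aux F hjoint hmult C hCF z hzC
          have h3 : 2 < C.card :=
            Finset.two_lt_card.mpr ⟨a, haC, c, hcC, d, hdD, hac, had, hcd⟩
          omega
        have twoC : 2 ≤ C.card := Finset.one_lt_card.mpr ⟨a, haC, c, hcC, hac⟩
        have twoD : 2 ≤ D.card := Finset.one_lt_card.mpr ⟨a, haD, d, hdD, had⟩
        exact three_blocks_aux F a (hmult a) A C D hA hCF hDF
          ⟨haA, h2A⟩ ⟨haC, twoC⟩ ⟨haD, twoD⟩ (Ne.symm hCA) (Ne.symm hDA) hCD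
    -- conclude: the filter of big members is {univ}
    set i0 : Fin n := ⟨0, by omega⟩
    set i1 : Fin n := ⟨1, by omega⟩
    have hi01 : i0 ≠ i1 := by simp [i0, i1, Fin.ext_iff]
    have hfe : F.filter (fun A => 2 ≤ A.card) = F.filter (fun A => i0 ∈ A ∧ i1 ∈ A) := by
      apply Multiset.filter_congr
      intro A hA
      constructor
      · intro h; rw [huniv A hA h]; simp
      · rintro ⟨h0, h1⟩
        exact Finset.one_lt_card.mpr ⟨i0, h0, i1, h1, hi01⟩
    obtain ⟨B, hB⟩ := Multiset.card_eq_one.mp (hjoint i0 i1 hi01)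
    have hBm : B ∈ F.filter (fun A => i0 ∈ A ∧ i1 ∈ A) := by
      rw [hB]; exact Multiset.mem_singleton_self B
    obtain ⟨hBF, h0, h1⟩ := Multiset.mem_filter.mp hBm
    have : B = Finset.univ :=
      huniv B hBF (Finset.one_lt_card.mpr ⟨i0, h0, i1, h1, hi01⟩)
    rw [hfe, hB, this]
end

section
/- Fix n and 1 < k < n. If F is a finite multiset of subsets of {1,…,n}, each of size ≥ 2, such that (a) for all i ≠ k, exactly one member of F contains both i and k; (b) for i < k < j, no member of F contains both i and j; (c) for distinct i,j both < k or both > k, exactly one member of F contains both; (d) exactly two members of F contain k; then F = {{1,…,k}, {k,…,n}}. -/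
/-- Combinatorial core of Lemma 4.3 (precise claim): boundary components are
indexed by `Fin n` (so the paper's `1 < k < n` becomes `0 < k.val` and
`k.val < n - 1`).  Let `F` be a finite multiset of subsets of `Fin n` of size
`≥ 2` such that: (a) for every `i ≠ k` exactly one member contains both `i` and
`k`; (b) for `i < k < j` no member contains both `i` and `j`; (c) for distinct
`i, j` both `< k` or both `> k` exactly one member contains both; (d) exactly
two members contain `k`.  Then `F = {{0,…,k}, {k,…,n−1}}`. -/
theorem lantern_enclosure_sets (n : ℕ) (k : Fin n)
    (hk0 : 0 < k.val) (hkn : k.val < n - 1)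
    (F : Multiset (Finset (Fin n)))
    (hsize : ∀ A ∈ F, 2 ≤ A.card)
    (ha : ∀ i : Fin n, i ≠ k →
      (F.filter (fun A => i ∈ A ∧ k ∈ A)).card = 1)
    (hb : ∀ i j : Fin n, i < k → k < j →
      (F.filter (fun A => i ∈ A ∧ j ∈ A)).card = 0)
    (hc : ∀ i j : Fin n, i ≠ j → ((i < k ∧ j < k) ∨ (k < i ∧ k < j)) →
      (F.filter (fun A => i ∈ A ∧ j ∈ A)).card = 1)
    (hd : (F.filter (fun A => k ∈ A)).card = 2) :
    F = {Finset.univ.filter (fun i => i ≤ k), Finset.univ.filter (fun i => k ≤ i)} := by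
  have hn : 0 < n := k.pos
  set i0 : Fin n := ⟨0, hn⟩ with hi0def
  have hi0k : i0 < k := by simpa [Fin.lt_def, hi0def] using hk0
  set j0 : Fin n := ⟨n - 1, Nat.sub_lt hn one_pos⟩ with hj0def
  have hkj0 : k < j0 := by simpa [Fin.lt_def, hj0def] using hkn
  -- no member contains both sides
  have hbF : ∀ (x y : Fin n), x < k → k < y → ∀ C ∈ F, ¬ (x ∈ C ∧ y ∈ C) := by
    intro x y hx hy C hC hxy
    have h0 := hb x y hx hy
    rw [Multiset.card_eq_zero] at h0
    have hmem : C ∈ Multiset.filter (fun A => x ∈ A ∧ y ∈ A) F :=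
      Multiset.mem_filter.mpr ⟨hC, hxy⟩
    rw [h0] at hmem
    exact Multiset.notMem_zero C hmem
  -- every x ≠ k lies in some member of the k-filter
  have hmem' : ∀ x : Fin n, x ≠ k → ∃ C ∈ Multiset.filter (fun A => k ∈ A) F, x ∈ C := by
    intro x hx
    obtain ⟨C, hC⟩ := Multiset.card_eq_one.mp (ha x hx)
    have hCmem : C ∈ Multiset.filter (fun A => x ∈ A ∧ k ∈ A) F := by
      rw [hC]; exact Multiset.mem_singleton_self C
    rw [Multiset.mem_filter] at hCmem
    exact ⟨C, Multiset.mem_filter.mpr ⟨hCmem.1, hCmem.2.2⟩, hCmem.2.1⟩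
  -- choose A, B with i0 ∈ A
  obtain ⟨A, B, hAB, hi0A⟩ :
      ∃ A B, Multiset.filter (fun A => k ∈ A) F = {A, B} ∧ i0 ∈ A := by
    obtain ⟨A, B, hAB⟩ := Multiset.card_eq_two.mp hd
    obtain ⟨C, hCmem, hi0C⟩ := hmem' i0 (ne_of_lt hi0k)
    rw [hAB] at hCmem
    rcases (by simpa using hCmem : C = A ∨ C = B) with h | h
    · exact ⟨A, B, hAB, h ▸ hi0C⟩
    · exact ⟨B, A, by rw [hAB, Multiset.pair_comm], h ▸ hi0C⟩
  have hAmem : A ∈ Multiset.filter (fun A => k ∈ A) F := by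
    rw [hAB]; exact Multiset.mem_cons_self _ _
  have hBmem : B ∈ Multiset.filter (fun A => k ∈ A) F := by
    rw [hAB]; simp
  have hAF : A ∈ F := (Multiset.mem_filter.mp hAmem).1
  have hBF : B ∈ F := (Multiset.mem_filter.mp hBmem).1
  have hkA : k ∈ A := (Multiset.mem_filter.mp hAmem).2
  have hkB : k ∈ B := (Multiset.mem_filter.mp hBmem).2
  -- j0 ∈ B
  have hj0B : j0 ∈ B := by
    obtain ⟨C, hCmem, hj0C⟩ := hmem' j0 (ne_of_gt hkj0)
    rw [hAB] at hCmem
    rcases (by simpa using hCmem : C = A ∨ C = B) with h | h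
    · exact absurd ⟨hi0A, h ▸ hj0C⟩ (hbF i0 j0 hi0k hkj0 A hAF)
    · exact h ▸ hj0C
  -- every x < k is in A, every y > k is in B
  have hAx : ∀ x : Fin n, x < k → x ∈ A := by
    intro x hx
    obtain ⟨C, hCmem, hxC⟩ := hmem' x (ne_of_lt hx)
    rw [hAB] at hCmem
    rcases (by simpa using hCmem : C = A ∨ C = B) with h | h
    · exact h ▸ hxC
    · exact absurd ⟨h ▸ hxC, hj0B⟩ (hbF x j0 hx hkj0 B hBF)
  have hBy : ∀ y : Fin n, k < y → y ∈ B := by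
    intro y hy
    obtain ⟨C, hCmem, hyC⟩ := hmem' y (ne_of_gt hy)
    rw [hAB] at hCmem
    rcases (by simpa using hCmem : C = A ∨ C = B) with h | h
    · exact absurd ⟨hi0A, h ▸ hyC⟩ (hbF i0 y hi0k hy A hAF)
    · exact h ▸ hyC
  -- identify A and B
  have hA : A = Finset.univ.filter (fun i => i ≤ k) := by
    ext x
    simp only [Finset.mem_filter, Finset.mem_univ, true_and]
    constructor
    · intro hx
      by_contra h
      exact hbF i0 x hi0k (not_le.mp h) A hAF ⟨hi0A, hx⟩
    · intro hx
      rcases lt_or_eq_of_le hx with h | h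
      · exact hAx x h
      · exact h ▸ hkA
  have hB : B = Finset.univ.filter (fun i => k ≤ i) := by
    ext x
    simp only [Finset.mem_filter, Finset.mem_univ, true_and]
    constructor
    · intro hx
      by_contra h
      exact hbF x j0 (not_le.mp h) hkj0 B hBF ⟨hx, hj0B⟩
    · intro hx
      rcases lt_or_eq_of_le hx with h | h
      · exact hBy x h
      · exact h ▸ hkB
  -- the rest of F is empty
  have hsplit : F = A ::ₘ B ::ₘ Multiset.filter (fun S => ¬ k ∈ S) F := by
    have h := Multiset.filter_add_not (fun A => k ∈ A) F
    rw [hAB] at h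
    calc F = {A, B} + Multiset.filter (fun S => ¬ k ∈ S) F := h.symm
      _ = A ::ₘ B ::ₘ Multiset.filter (fun S => ¬ k ∈ S) F := by
          rw [Multiset.insert_eq_cons, Multiset.cons_add, Multiset.singleton_add]
  have hrest : Multiset.filter (fun S => ¬ k ∈ S) F = 0 := by
    rw [Multiset.eq_zero_iff_forall_notMem]
    intro C hC
    rw [Multiset.mem_filter] at hC
    obtain ⟨hCF, hkC⟩ := hC
    obtain ⟨x, hxC, y, hyC, hxy⟩ := Finset.one_lt_card.mp (hsize C hCF)
    have hxk : x ≠ k := fun h => hkC (h ▸ hxC)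
    have hyk : y ≠ k := fun h => hkC (h ▸ hyC)
    rcases lt_or_gt_of_ne hxk with hx | hx <;> rcases lt_or_gt_of_ne hyk with hy | hy
    · -- both < k : A and C both contain x,y, contradicting card 1
      have h1 := hc x y hxy (Or.inl ⟨hx, hy⟩)
      obtain ⟨D, hD⟩ := Multiset.card_eq_one.mp h1
      have hAD : A = D := by
        have : A ∈ Multiset.filter (fun S => x ∈ S ∧ y ∈ S) F :=
          Multiset.mem_filter.mpr ⟨hAF, hAx x hx, hAx y hy⟩
        rw [hD] at this; exact Multiset.mem_singleton.mp this
      have hCD : C = D := by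
        have : C ∈ Multiset.filter (fun S => x ∈ S ∧ y ∈ S) F :=
          Multiset.mem_filter.mpr ⟨hCF, hxC, hyC⟩
        rw [hD] at this; exact Multiset.mem_singleton.mp this
      exact hkC (by rw [hCD, ← hAD]; exact hkA)
    · exact hbF x y hx hy C hCF ⟨hxC, hyC⟩
    · exact hbF y x hy hx C hCF ⟨hyC, hxC⟩
    · have h1 := hc x y hxy (Or.inr ⟨hx, hy⟩)
      obtain ⟨D, hD⟩ := Multiset.card_eq_one.mp h1
      have hBD : B = D := by
        have : B ∈ Multiset.filter (fun S => x ∈ S ∧ y ∈ S) F :=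
          Multiset.mem_filter.mpr ⟨hBF, hBy x hx, hBy y hy⟩
        rw [hD] at this; exact Multiset.mem_singleton.mp this
      have hCD : C = D := by
        have : C ∈ Multiset.filter (fun S => x ∈ S ∧ y ∈ S) F :=
          Multiset.mem_filter.mpr ⟨hCF, hxC, hyC⟩
        rw [hD] at this; exact Multiset.mem_singleton.mp this
      exact hkC (by rw [hCD, ← hBD]; exact hkB)
  rw [hsplit, hrest, hA, hB]
  rfl
end

section
/- For n ≥ 4 there is no multiset F of subsets of {1,…,n}, each of size ≥ 2, such that every pair {i,j} is contained in exactly one member of F and every element of {1,…,n} lies in exactly two members of F. -/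
section Aux
variable {n : ℕ} (F : Multiset (Finset (Fin n)))

/-- two distinct Finsets in a multiset with card 1 filter is impossible -/
lemma two_mem_card_le (s : Multiset (Finset (Fin n))) (A B : Finset (Fin n))
    (hA : A ∈ s) (hB : B ∈ s) (hne : A ≠ B) : 2 ≤ Multiset.card s := by
  obtain ⟨t, rfl⟩ := Multiset.exists_cons_of_mem hA
  have hBt : B ∈ t := by
    rcases Multiset.mem_cons.1 hB with h | h
    · exact absurd h.symm hne
    · exact h
  have ht : 0 < Multiset.card t := Multiset.card_pos.2 (fun h0 => by simp [h0] at hBt)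
  simp only [Multiset.card_cons]
  omega

lemma exists_partner
    (hrep : ∀ i : Fin n, (F.filter (fun A => i ∈ A)).card = 2)
    (i : Fin n) (A : Finset (Fin n)) (hAF : A ∈ F) (hiA : i ∈ A) :
    ∃ C, F.filter (fun X => i ∈ X) = {A, C} := by
  obtain ⟨P, Q, hPQ⟩ := Multiset.card_eq_two.1 (hrep i)
  have hAmem : A ∈ F.filter (fun X => i ∈ X) := Multiset.mem_filter.2 ⟨hAF, hiA⟩
  rw [hPQ] at hAmem
  rcases Multiset.mem_cons.1 hAmem with h | h
  · exact ⟨Q, by rw [hPQ, h]⟩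
  · have hQA : A = Q := by simpa using h
    subst hQA
    exact ⟨P, by rw [hPQ]; exact Multiset.cons_swap P A 0⟩

end Aux

section Props
variable {n : ℕ} {F : Multiset (Finset (Fin n))}
  (hcard : ∀ A ∈ F, 2 ≤ A.card)
  (hpair : ∀ i j : Fin n, i ≠ j → (F.filter (fun A => i ∈ A ∧ j ∈ A)).card = 1)
  {i : Fin n} {A B : Finset (Fin n)}
  (hAB : F.filter (fun X => i ∈ X) = {A, B})

include hAB

lemma memA : A ∈ F ∧ i ∈ A := by
  have : A ∈ F.filter (fun X => i ∈ X) := by rw [hAB]; simp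
  exact ⟨(Multiset.mem_filter.1 this).1, (Multiset.mem_filter.1 this).2⟩

lemma memB : B ∈ F ∧ i ∈ B := by
  have : B ∈ F.filter (fun X => i ∈ X) := by rw [hAB]; simp
  exact ⟨(Multiset.mem_filter.1 this).1, (Multiset.mem_filter.1 this).2⟩

include hpair

lemma cover : ∀ j : Fin n, j ∈ A ∨ j ∈ B := by
  intro j
  by_cases hji : j = i
  · subst hji; exact Or.inl (memA hAB).2
  · have h1 := hpair i j (Ne.symm hji)
    have : ∃ C ∈ F.filter (fun X => i ∈ X ∧ j ∈ X), True := by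
      have : (F.filter (fun X => i ∈ X ∧ j ∈ X)) ≠ 0 := by
        intro h; rw [h] at h1; simp at h1
      obtain ⟨C, hC⟩ := Multiset.exists_mem_of_ne_zero this
      exact ⟨C, hC, trivial⟩
    obtain ⟨C, hC, -⟩ := this
    have hC' := Multiset.mem_filter.1 hC
    have : C ∈ F.filter (fun X => i ∈ X) := Multiset.mem_filter.2 ⟨hC'.1, hC'.2.1⟩
    rw [hAB] at this
    rcases Multiset.mem_cons.1 this with h | h
    · exact Or.inl (h ▸ hC'.2.2)
    · have : C = B := by simpa using h
      exact Or.inr (this ▸ hC'.2.2)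

lemma sep : ∀ j : Fin n, j ≠ i → ¬(j ∈ A ∧ j ∈ B) := by
  intro j hji ⟨hjA, hjB⟩
  have h1 := hpair j i hji
  have h2 : F.filter (fun X => j ∈ X ∧ i ∈ X)
      = Multiset.filter (fun X => j ∈ X) (F.filter (fun X => i ∈ X)) := by
    rw [Multiset.filter_filter]
  rw [h2, hAB] at h1
  have h3 : Multiset.filter (fun X => j ∈ X) ({A, B} : Multiset (Finset (Fin n)))
      = {A, B} := by
    simp [Multiset.filter_cons, Multiset.filter_singleton, hjA, hjB]
  rw [h3] at h1
  simp at h1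

lemma cardsum : A.card + B.card = n + 1 := by
  have hu : A ∪ B = Finset.univ := by
    ext j
    simp only [Finset.mem_union, Finset.mem_univ, iff_true]
    exact cover hpair hAB j
  have hi : A ∩ B = {i} := by
    ext j
    simp only [Finset.mem_inter, Finset.mem_singleton]
    constructor
    · intro h
      by_contra hji
      exact sep hpair hAB j hji h
    · rintro rfl
      exact ⟨(memA hAB).2, (memB hAB).2⟩
  have h4 := Finset.card_union_add_card_inter A B
  rw [hu, hi] at h4
  simp [Finset.card_univ] at h4
  omega

end Props

section KeyAux
variable {n : ℕ} {F : Multiset (Finset (Fin n))}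

lemma card_eq_key
    (hcard : ∀ A ∈ F, 2 ≤ A.card)
    (hpair : ∀ i j : Fin n, i ≠ j → (F.filter (fun A => i ∈ A ∧ j ∈ A)).card = 1)
    (hrep : ∀ i : Fin n, (F.filter (fun A => i ∈ A)).card = 2)
    {i : Fin n} {A B : Finset (Fin n)}
    (hAB : F.filter (fun X => i ∈ X) = {A, B})
    {a : Fin n} (haA : a ∈ A) (hai : a ≠ i) :
    A.card = n - 1 := by
  have hAF := (memA hAB).1
  have haB : a ∉ B := fun h => sep hpair hAB a hai ⟨haA, h⟩
  obtain ⟨C, hAC⟩ := exists_partner F hrep a A hAF haA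
  have hCF := (memB hAC).1
  have haC : a ∈ C := (memB hAC).2
  have hsum : A.card + C.card = n + 1 := cardsum hpair hAC
  have hCB : C ≠ B := fun h => haB (h ▸ haC)
  -- C \ {a} ⊆ B
  have hsub : ∀ x ∈ C, x ≠ a → x ∈ B := by
    intro x hxC hxa
    rcases cover hpair hAB x with hxA | hxB
    · exact absurd ⟨hxA, hxC⟩ (sep hpair hAC x hxa)
    · exact hxB
  -- |C| ≤ 2
  have hC2 : C.card ≤ 2 := by
    by_contra h
    push_neg at h
    have h3 : 2 ≤ (C.erase a).card := by
      rw [Finset.card_erase_of_mem haC]; omega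
    obtain ⟨x, hx, y, hy, hxy⟩ := Finset.one_lt_card.1 (by omega : 1 < (C.erase a).card)
    have hxC := Finset.mem_of_mem_erase hx
    have hyC := Finset.mem_of_mem_erase hy
    have hxB := hsub x hxC (Finset.ne_of_mem_erase hx)
    have hyB := hsub y hyC (Finset.ne_of_mem_erase hy)
    have hBmem : B ∈ F.filter (fun X => x ∈ X ∧ y ∈ X) :=
      Multiset.mem_filter.2 ⟨(memB hAB).1, hxB, hyB⟩
    have hCmem : C ∈ F.filter (fun X => x ∈ X ∧ y ∈ X) :=
      Multiset.mem_filter.2 ⟨hCF, hxC, hyC⟩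
    have := two_mem_card_le _ B C hBmem hCmem (Ne.symm hCB)
    rw [hpair x y hxy] at this
    omega
  have := hcard C hCF
  omega

end KeyAux

/-- Combinatorial nonexistence step in the `n ≥ 4` case of Lemma 4.1: for
`n ≥ 4` there is no multiset `F` of subsets of `{1,…,n}` of size `≥ 2` such
that every pair of distinct elements is contained in exactly one member of `F`
and every element lies in exactly two members of `F`. -/
theorem no_replication_two_design (n : ℕ) (hn : 4 ≤ n) :
    ¬ ∃ F : Multiset (Finset (Fin n)),
      (∀ A ∈ F, 2 ≤ A.card) ∧
      (∀ i j : Fin n, i ≠ j →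
        (F.filter (fun A => i ∈ A ∧ j ∈ A)).card = 1) ∧
      (∀ i : Fin n, (F.filter (fun A => i ∈ A)).card = 2) := by
  rintro ⟨F, hcard, hpair, hrep⟩
  have hpos : 0 < n := by omega
  set i : Fin n := ⟨0, hpos⟩ with hi
  obtain ⟨P, Q, hPQ⟩ := Multiset.card_eq_two.1 (hrep i)
  have hAB : F.filter (fun X => i ∈ X) = {P, Q} := hPQ
  have hBA : F.filter (fun X => i ∈ X) = {Q, P} := by
    rw [hAB]; exact Multiset.cons_swap P Q 0
  have hPF := (memA hAB).1
  have hQF := (memB hAB).1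
  obtain ⟨a, haP, hai⟩ := Finset.exists_mem_ne
    (s := P) (by have := hcard P hPF; omega) i
  obtain ⟨b, hbQ, hbi⟩ := Finset.exists_mem_ne
    (s := Q) (by have := hcard Q hQF; omega) i
  have h1 : P.card = n - 1 := card_eq_key hcard hpair hrep hAB haP hai
  have h2 : Q.card = n - 1 := card_eq_key hcard hpair hrep hBA hbQ hbi
  have h3 := cardsum hpair hAB
  omega
end
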